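/- Let $f_0\in L^1([0,1])$ and let $\Pi$ be a prior on a Polish space $\Theta$ embedding continuously into $L^1([0,1])$ with $\Pi(f: f\le f_0)>0$. Then for every Borel set $B\subseteq\Theta$, $E_{f_0}\big[\Pi(f\in B\mid N)\big]\le S_[(n,B,f_0)$. In particular the bound does not depend on the prior $\Pi$. -/

import Mathlib

/-
Fix a countable family `(ℓ_j)` covering `B` from below and let `U` be the event that, for some `j`,
no point of `N` lies below the graph of `ℓ_j`. By the void probabilities,
`P_{f₀}(U) ≤ Σ_j exp(-λ_{f₀}{y < ℓ_j(x)}) = Σ_j exp(-n ∫(ℓ_j - f₀)₊)`. Off `U` the posterior of `B`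
vanishes: if `ℓ_j ≤ f` a.e., then a.s. no point of `N` has its abscissa in the null set
`{ℓ_j > f}`, so a point below `ℓ_j` is also below `f` and the likelihood of `f` is zero. As the
posterior is at most one, `E_{f₀}[Π(B | N)] ≤ P_{f₀}(U)`.
-/

open MeasureTheory Real Set Filter
open scoped ENNReal NNReal Topology

noncomputable section

/-- The integral of `f` over `[0,1]`. -/
def intI (f : ℝ → ℝ) : ℝ := ∫ x in Set.Icc (0:ℝ) 1, f x

/-- The `L¹([0,1])` distance between `f` and `g`. -/
def dist1 (f g : ℝ → ℝ) : ℝ := ∫ x in Set.Icc (0:ℝ) 1, |f x - g x|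

/-- `∫₀¹ (f-g)₊`. -/
def intPos (f g : ℝ → ℝ) : ℝ := ∫ x in Set.Icc (0:ℝ) 1, max (f x - g x) 0

/-- `f ≤ g` Lebesgue-almost everywhere on `[0,1]`. -/
def aeLeI (f g : ℝ → ℝ) : Prop :=
  ∀ᵐ x ∂((volume : Measure ℝ).restrict (Set.Icc (0:ℝ) 1)), f x ≤ g x

/-- The intensity measure `λ_f(x,y) = n · 1(f(x) ≤ y)` on `[0,1] × ℝ`. -/
def intensity (n : ℕ) (f : ℝ → ℝ) : Measure (ℝ × ℝ) :=
  ((volume : Measure (ℝ × ℝ)).restrict (Set.Icc (0:ℝ) 1 ×ˢ (Set.univ : Set ℝ))).withDensity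
    (fun p => if f p.1 ≤ p.2 then (n : ℝ≥0∞) else 0)

/-- `P` is the law of a Poisson point process with (σ-finite, simple) intensity measure `μ`,
whose support points are measurably enumerated by `pts`; the law is characterised through its
void probabilities `P(N(A) = 0) = exp(-μ(A))`. -/
def IsPoissonPP {Ω : Type*} [MeasurableSpace Ω] (μ : Measure (ℝ × ℝ)) (P : Measure Ω)
    (pts : Ω → ℕ → ℝ × ℝ) : Prop :=
  IsProbabilityMeasure P ∧ (∀ i, Measurable fun ω => pts ω i) ∧
    ∀ A : Set (ℝ × ℝ), MeasurableSet A →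
      P {ω | ∀ i, pts ω i ∉ A} =
        if μ A = ∞ then 0 else ENNReal.ofReal (Real.exp (-(μ A).toReal))

/-- The support boundary detection model: for every `n` and every `f ∈ L¹([0,1])`,
`P n f` is the law of a Poisson point process with intensity `n · 1(f(x) ≤ y)`,
with support points `(Xᵢ, Yᵢ)ᵢ = pts`. -/
def IsBoundaryModel {Ω : Type*} [MeasurableSpace Ω] (P : ℕ → (ℝ → ℝ) → Measure Ω)
    (pts : Ω → ℕ → ℝ × ℝ) : Prop :=
  ∀ n f, IntegrableOn f (Set.Icc (0:ℝ) 1) → IsPoissonPP (intensity n f) (P n f) pts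

/-- The likelihood `e^{n∫f} · 1(∀ i : f(Xᵢ) ≤ Yᵢ)` of `f` given the data `ω`. -/
def lik {Ω : Type*} (n : ℕ) (pts : Ω → ℕ → ℝ × ℝ) (f : ℝ → ℝ) (ω : Ω) : ℝ≥0∞ :=
  {ω' : Ω | ∀ i, f (pts ω' i).1 ≤ (pts ω' i).2}.indicator
    (fun _ => ENNReal.ofReal (Real.exp (n * intI f))) ω

/-- The posterior mass of the set `B ⊆ Θ` given the data `ω`, for the prior `Pi` on `Θ`
embedded into `L¹([0,1])` via `ι`:
`Π(B | N) = ∫_B e^{n∫f} 1(∀i : f(Xᵢ) ≤ Yᵢ) dΠ(f) / ∫_Θ e^{n∫f} 1(∀i : f(Xᵢ) ≤ Yᵢ) dΠ(f)`. -/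
def post {Ω Θ : Type*} [MeasurableSpace Θ] (n : ℕ) (pts : Ω → ℕ → ℝ × ℝ) (Pi : Measure Θ)
    (ι : Θ → ℝ → ℝ) (B : Set Θ) (ω : Ω) : ℝ≥0∞ :=
  (∫⁻ θ in B, lik n pts (ι θ) ω ∂Pi) / ∫⁻ θ, lik n pts (ι θ) ω ∂Pi

/-- A prior on a Polish space `Θ` which embeds continuously into `L¹([0,1])` via `ι`. -/
def IsL1Prior {Θ : Type*} [MeasurableSpace Θ] [TopologicalSpace Θ] (Pi : Measure Θ)
    (ι : Θ → ℝ → ℝ) : Prop :=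
  IsProbabilityMeasure Pi ∧ Measurable (Function.uncurry ι) ∧
    (∀ θ, IntegrableOn (ι θ) (Set.Icc (0:ℝ) 1)) ∧
    ∀ θ₀, Tendsto (fun θ => dist1 (ι θ) (ι θ₀)) (𝓝 θ₀) (𝓝 0)

/-- The `ε`-covering number of a class `F` of functions with respect to the supremum norm
on `[0,1]` (with measurable centres). -/
def supCover (ε : ℝ) (F : Set (ℝ → ℝ)) : ℕ∞ :=
  ⨅ (G : Finset (ℝ → ℝ)) (_ : (∀ g ∈ G, Measurable g) ∧
      ∀ f ∈ F, ∃ g ∈ G, ∀ x ∈ Set.Icc (0:ℝ) 1, |f x - g x| ≤ ε),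
    (G.card : ℕ∞)

/-- The one-sided bracketing number `N_[(δ, F)`: the smallest number of functions
`ℓ₁, …, ℓ_M ∈ L¹([0,1])` such that every `f ∈ F` admits some `j` with `ℓ_j ≤ f` and
`∫ (f - ℓ_j) ≤ δ`. -/
def bracketNum (δ : ℝ) (F : Set (ℝ → ℝ)) : ℕ∞ :=
  ⨅ (G : Finset (ℝ → ℝ)) (_ : (∀ l ∈ G, IntegrableOn l (Set.Icc (0:ℝ) 1)) ∧
      ∀ f ∈ F, ∃ l ∈ G, aeLeI l f ∧ intI (fun x => f x - l x) ≤ δ),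
    (G.card : ℕ∞)

/-- The separation quantity `S_[(n, F, f₀) = inf_{(ℓ_j)_{j ∈ J}} Σ_{j ∈ J} e^{-n ∫ (ℓ_j - f₀)₊}`,
the infimum over countable families `(ℓ_j)_{j ∈ J} ⊆ L¹([0,1])` such that every `f ∈ F`
admits some `j ∈ J` with `ℓ_j ≤ f`. -/
def sepQ (n : ℕ) (F : Set (ℝ → ℝ)) (f0 : ℝ → ℝ) : ℝ≥0∞ :=
  ⨅ (l : ℕ → ℝ → ℝ) (J : Set ℕ)
    (_ : (∀ j ∈ J, IntegrableOn (l j) (Set.Icc (0:ℝ) 1)) ∧ ∀ f ∈ F, ∃ j ∈ J, aeLeI (l j) f),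
    ∑' j : J, ENNReal.ofReal (Real.exp (-(n : ℝ) * intPos (l (j : ℕ)) f0))

theorem IsPoissonPP.ae_forall_notMem {Ω : Type*} [MeasurableSpace Ω] {μ : Measure (ℝ × ℝ)}
    {P : Measure Ω} {pts : Ω → ℕ → ℝ × ℝ} (h : IsPoissonPP μ P pts) {A : Set (ℝ × ℝ)}
    (hA : MeasurableSet A) (hA0 : μ A = 0) : ∀ᵐ ω ∂P, ∀ i, pts ω i ∉ A := by
  obtain ⟨hP, hpts, hvoid⟩ := h
  have hmeas : MeasurableSet {ω | ∀ i, pts ω i ∉ A} := by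
    rw [Set.ofPred_forall]
    exact MeasurableSet.iInter fun i => hpts i hA.compl
  rw [ae_iff_measure_eq hmeas.nullMeasurableSet, hvoid A hA, hA0]
  simp

theorem volume_restrict_Icc_prod_univ :
    (volume : Measure (ℝ × ℝ)).restrict (Icc (0:ℝ) 1 ×ˢ univ) =
      ((volume : Measure ℝ).restrict (Icc 0 1)).prod volume := by
  rw [Measure.volume_eq_prod, ← Measure.prod_restrict, Measure.restrict_univ]

theorem intensity_prod_univ_eq_zero (n : ℕ) (f : ℝ → ℝ) {s : Set ℝ}
    (hs : (volume : Measure ℝ).restrict (Icc 0 1) s = 0) : intensity n f (s ×ˢ univ) = 0 := by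
  refine withDensity_absolutelyContinuous _ _ ?_
  rw [volume_restrict_Icc_prod_univ, Measure.prod_prod, hs, zero_mul]

theorem intensity_congr_ae (n : ℕ) {f g : ℝ → ℝ}
    (hfg : f =ᵐ[(volume : Measure ℝ).restrict (Icc 0 1)] g) : intensity n f = intensity n g := by
  refine withDensity_congr_ae ?_
  rw [EventuallyEq, ae_iff, volume_restrict_Icc_prod_univ]
  refine measure_mono_null (t := {x | ¬f x = g x} ×ˢ univ)
    (fun p hp => ⟨fun heq => hp ?_, mem_univ p.2⟩)
    (by rw [Measure.prod_prod, ae_iff.1 hfg, zero_mul])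
  simp only [heq]

theorem intensity_setOf_snd_lt (n : ℕ) {f g : ℝ → ℝ} (hf : Measurable f) (hg : Measurable g) :
    intensity n f {p | p.2 < g p.1} = n * ∫⁻ x in Icc 0 1, ENNReal.ofReal (g x - f x) := by
  set dens : ℝ × ℝ → ℝ≥0∞ := fun p => if f p.1 ≤ p.2 then (n : ℝ≥0∞) else 0
  have hA : MeasurableSet {p : ℝ × ℝ | p.2 < g p.1} :=
    measurableSet_lt measurable_snd (hg.comp measurable_fst)
  have hdens : Measurable dens :=
    Measurable.ite (measurableSet_le (hf.comp measurable_fst) measurable_snd)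
      measurable_const measurable_const
  rw [intensity, withDensity_apply _ hA, volume_restrict_Icc_prod_univ, ← lintegral_indicator hA,
    lintegral_prod _ (hdens.indicator hA).aemeasurable,
    ← lintegral_const_mul _ (by fun_prop)]
  refine lintegral_congr fun x => ?_
  have hsection : (fun y => {p : ℝ × ℝ | p.2 < g p.1}.indicator dens (x, y)) =
      (Ico (f x) (g x)).indicator fun _ => (n : ℝ≥0∞) := by
    ext y
    by_cases h1 : y < g x <;> by_cases h2 : f x ≤ y <;> simp [dens, indicator, h1, h2]
  rw [hsection, lintegral_indicator measurableSet_Ico, setLIntegral_const, Real.volume_Ico]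

theorem lintegral_ofReal_sub_eq_intPos {f g : ℝ → ℝ} (hf : IntegrableOn f (Icc 0 1))
    (hg : IntegrableOn g (Icc 0 1)) :
    ∫⁻ x in Icc 0 1, ENNReal.ofReal (g x - f x) = ENNReal.ofReal (intPos g f) := by
  rw [intPos, ofReal_integral_eq_lintegral_ofReal (f := fun x => max (g x - f x) 0)
    (hg.sub hf).pos_part (ae_of_all _ fun x => le_max_right _ _)]
  simp [ENNReal.ofReal_max]

theorem le_sepQ_of_forall_measurable {n : ℕ} {F : Set (ℝ → ℝ)} {f0 : ℝ → ℝ} {a : ℝ≥0∞}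
    (h : ∀ (l : ℕ → ℝ → ℝ) (J : Set ℕ), (∀ j, Measurable (l j)) →
      (∀ j ∈ J, IntegrableOn (l j) (Icc 0 1)) → (∀ f ∈ F, ∃ j ∈ J, aeLeI (l j) f) →
      a ≤ ∑' j : J, ENNReal.ofReal (exp (-n * intPos (l j) f0))) :
    a ≤ sepQ n F f0 := by
  refine le_iInf fun l => le_iInf fun J => le_iInf fun ⟨hl, hcov⟩ => ?_
  have hmod : ∀ j, ∃ l' : ℝ → ℝ, Measurable l' ∧
      (j ∈ J → l j =ᵐ[(volume : Measure ℝ).restrict (Icc 0 1)] l') := by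
    intro j
    by_cases hj : j ∈ J
    · obtain ⟨l', hm, he⟩ := (hl j hj).aestronglyMeasurable.aemeasurable
      exact ⟨l', hm, fun _ => he⟩
    · exact ⟨0, measurable_const, fun h => absurd h hj⟩
  choose l' hl'm hl' using hmod
  have hsum : ∀ j ∈ J, intPos (l' j) f0 = intPos (l j) f0 := fun j hj =>
    integral_congr_ae (by filter_upwards [hl' j hj] with x hx; rw [hx])
  refine (h l' J hl'm (fun j hj => (hl j hj).congr (hl' j hj)) fun f hf => ?_).trans_eq
    (tsum_congr fun j => by rw [hsum j j.2])
  obtain ⟨j, hj, hle⟩ := hcov f hf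
  refine ⟨j, hj, ?_⟩
  filter_upwards [hle, hl' j hj] with x h1 h2
  rwa [← h2]

theorem post_le_one {Ω Θ : Type*} [MeasurableSpace Θ] (n : ℕ) (pts : Ω → ℕ → ℝ × ℝ)
    (Pi : Measure Θ) (ι : Θ → ℝ → ℝ) (B : Set Θ) (ω : Ω) : post n pts Pi ι B ω ≤ 1 :=
  (ENNReal.div_le_div_right (setLIntegral_le_lintegral _ _) _).trans ENNReal.div_self_le_one

theorem post_eq_zero_of_ae {Ω Θ : Type*} [MeasurableSpace Θ] {n : ℕ} {pts : Ω → ℕ → ℝ × ℝ}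
    {Pi : Measure Θ} {ι : Θ → ℝ → ℝ} {B : Set Θ} {ω : Ω}
    (h : ∀ᵐ θ ∂Pi.restrict B, ¬∀ i, ι θ (pts ω i).1 ≤ (pts ω i).2) :
    post n pts Pi ι B ω = 0 := by
  have hlik : ∀ᵐ θ ∂Pi.restrict B, lik n pts (ι θ) ω = 0 := by
    filter_upwards [h] with θ hθ
    exact indicator_of_notMem (s := {ω' | ∀ i, ι θ (pts ω' i).1 ≤ (pts ω' i).2}) hθ _
  rw [post, lintegral_congr_ae hlik, lintegral_zero, ENNReal.zero_div]

namespace IsBoundaryModel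

variable {Ω : Type*} [MeasurableSpace Ω] {P : ℕ → (ℝ → ℝ) → Measure Ω}
  {pts : Ω → ℕ → ℝ × ℝ}

theorem ae_forall_fst_notMem (hmodel : IsBoundaryModel P pts) (n : ℕ) {f : ℝ → ℝ}
    (hf : IntegrableOn f (Icc 0 1)) {s : Set ℝ}
    (hs : (volume : Measure ℝ).restrict (Icc 0 1) s = 0) :
    ∀ᵐ ω ∂P n f, ∀ i, (pts ω i).1 ∉ s := by
  set t := toMeasurable ((volume : Measure ℝ).restrict (Icc 0 1)) s
  have ht : intensity n f (t ×ˢ univ) = 0 :=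
    intensity_prod_univ_eq_zero n f (by rwa [measure_toMeasurable])
  filter_upwards [(hmodel n f hf).ae_forall_notMem
    ((measurableSet_toMeasurable _ s).prod MeasurableSet.univ) ht] with ω hω i hi
  exact hω i ⟨subset_toMeasurable _ s hi, mem_univ _⟩

theorem ae_forall_le_of_aeLeI (hmodel : IsBoundaryModel P pts) (n : ℕ) {f g h : ℝ → ℝ}
    (hf : IntegrableOn f (Icc 0 1)) (hgh : aeLeI g h) :
    ∀ᵐ ω ∂P n f, ∀ i, g (pts ω i).1 ≤ h (pts ω i).1 := by
  filter_upwards [hmodel.ae_forall_fst_notMem n hf (ae_iff.1 hgh)] with ω hω i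
  simpa using hω i

theorem measure_forall_le_snd (hmodel : IsBoundaryModel P pts) (n : ℕ) {f g : ℝ → ℝ}
    (hf : IntegrableOn f (Icc 0 1)) (hg : IntegrableOn g (Icc 0 1)) (hgm : Measurable g) :
    P n f {ω | ∀ i, g (pts ω i).1 ≤ (pts ω i).2} = ENNReal.ofReal (exp (-n * intPos g f)) := by
  obtain ⟨f', hf'm, hff'⟩ := hf.aestronglyMeasurable.aemeasurable
  have hA : MeasurableSet {p : ℝ × ℝ | p.2 < g p.1} :=
    measurableSet_lt measurable_snd (hgm.comp measurable_fst)
  have hμ : intensity n f {p | p.2 < g p.1} = n * ENNReal.ofReal (intPos g f) := by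
    rw [intensity_congr_ae n hff', intensity_setOf_snd_lt n hf'm hgm,
      ← lintegral_ofReal_sub_eq_intPos hf hg]
    congr 1
    refine lintegral_congr_ae ?_
    filter_upwards [hff'] with x hx
    rw [hx]
  have hset : {ω | ∀ i, g (pts ω i).1 ≤ (pts ω i).2} =
      {ω | ∀ i, pts ω i ∉ {p | p.2 < g p.1}} := by
    simp [not_lt]
  rw [hset, (hmodel n f hf).2.2 _ hA, hμ, if_neg (by finiteness), ENNReal.toReal_mul,
    ENNReal.toReal_natCast, ENNReal.toReal_ofReal
    (show 0 ≤ intPos g f from integral_nonneg fun x => le_max_right _ _),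
    neg_mul]

theorem lintegral_post_le_tsum {Θ : Type*} [MeasurableSpace Θ] (hmodel : IsBoundaryModel P pts)
    {n : ℕ} {f0 : ℝ → ℝ} (hf0 : IntegrableOn f0 (Icc 0 1)) {Pi : Measure Θ} [SFinite Pi]
    {ι : Θ → ℝ → ℝ} (hι : Measurable (Function.uncurry ι)) {B : Set Θ} (hB : MeasurableSet B)
    {l : ℕ → ℝ → ℝ} {J : Set ℕ} (hlm : ∀ j, Measurable (l j))
    (hl : ∀ j ∈ J, IntegrableOn (l j) (Icc 0 1)) (hcov : ∀ θ ∈ B, ∃ j ∈ J, aeLeI (l j) (ι θ)) :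
    ∫⁻ ω, post n pts Pi ι B ω ∂P n f0 ≤
      ∑' j : J, ENNReal.ofReal (exp (-n * intPos (l j) f0)) := by
  obtain ⟨hP, hpts, -⟩ := hmodel n f0 hf0
  set E : ℕ → Set Ω := fun j => {ω | ∀ i, l j (pts ω i).1 ≤ (pts ω i).2}
  set U := ⋃ j ∈ J, E j
  have hU : MeasurableSet U := .biUnion J.to_countable fun j _ =>
    measurableSet_setOfPred.2 (Measurable.forall fun i => measurableSet_setOfPred.1
      (measurableSet_le ((hlm j).comp (hpts i).fst) (hpts i).snd))
  have hjoint : MeasurableSet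
      {q : Θ × Ω | (∀ i, ι q.1 (pts q.2 i).1 ≤ (pts q.2 i).2) → q.2 ∈ U} := by
    refine measurableSet_setOfPred.2 (Measurable.imp (Measurable.forall fun i => ?_)
      (measurableSet_setOfPred.1 (measurable_snd hU)))
    exact measurableSet_setOfPred.1 (measurableSet_le
      (hι.comp (measurable_fst.prodMk ((hpts i).comp measurable_snd).fst))
      ((hpts i).comp measurable_snd).snd)
  have hkey : ∀ᵐ θ ∂Pi.restrict B, ∀ᵐ ω ∂P n f0,
      (∀ i, ι θ (pts ω i).1 ≤ (pts ω i).2) → ω ∈ U := by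
    filter_upwards [ae_restrict_mem hB] with θ hθ
    obtain ⟨j, hj, hlj⟩ := hcov θ hθ
    filter_upwards [hmodel.ae_forall_le_of_aeLeI n hf0 hlj] with ω hω hlik
    exact mem_biUnion hj fun i => (hω i).trans (hlik i)
  have hpost : ∀ᵐ ω ∂P n f0, post n pts Pi ι B ω ≤ U.indicator 1 ω := by
    filter_upwards [(Measure.ae_ae_comm hjoint).1 hkey] with ω hω
    by_cases hωU : ω ∈ U
    · simpa [hωU] using post_le_one n pts Pi ι B ω
    · rw [indicator_of_notMem hωU, post_eq_zero_of_ae]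
      filter_upwards [hω] with θ hθ h
      exact hωU (hθ h)
  calc ∫⁻ ω, post n pts Pi ι B ω ∂P n f0
      ≤ ∫⁻ ω, U.indicator 1 ω ∂P n f0 := lintegral_mono_ae hpost
    _ = P n f0 U := lintegral_indicator_one hU
    _ ≤ ∑' j : J, P n f0 (E j) := measure_biUnion_le _ J.to_countable E
    _ = _ := tsum_congr fun j => hmodel.measure_forall_le_snd n hf0 (hl j j.2) (hlm j)

end IsBoundaryModel

theorem stmt_5_general {Ω Θ : Type*} [MeasurableSpace Ω] [MeasurableSpace Θ] [TopologicalSpace Θ]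
    (n : ℕ)
    (P : ℕ → (ℝ → ℝ) → Measure Ω) (pts : Ω → ℕ → ℝ × ℝ)
    (hmodel : IsBoundaryModel P pts)
    (f0 : ℝ → ℝ) (hf0 : IntegrableOn f0 (Set.Icc (0:ℝ) 1))
    (Pi : Measure Θ) (ι : Θ → ℝ → ℝ) (hprior : IsL1Prior Pi ι)
    (B : Set Θ) (hB : MeasurableSet B) :
    ∫⁻ ω, post n pts Pi ι B ω ∂(P n f0) ≤ sepQ n (ι '' B) f0 := by
  obtain ⟨hPi, hι, -, -⟩ := hprior
  exact le_sepQ_of_forall_measurable fun l J hlm hl hcov =>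
    hmodel.lintegral_post_le_tsum hf0 hι hB hlm hl fun θ hθ => hcov _ (mem_image_of_mem ι hθ)

/-- Proposition 2.5: posterior bound by the separation quantity.
If `Π(f : f ≤ f₀) > 0`, then for every Borel set `B ⊆ Θ`,
`E_{f₀}[Π(f ∈ B | N)] ≤ S_[(n, B, f₀)`; the bound does not depend on the prior. -/
theorem stmt_5 {Ω Θ : Type*} [MeasurableSpace Ω] [MeasurableSpace Θ] [TopologicalSpace Θ]
    [PolishSpace Θ] [BorelSpace Θ] (n : ℕ) (hn : 1 ≤ n)
    (P : ℕ → (ℝ → ℝ) → Measure Ω) (pts : Ω → ℕ → ℝ × ℝ)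
    (hmodel : IsBoundaryModel P pts)
    (f0 : ℝ → ℝ) (hf0 : IntegrableOn f0 (Set.Icc (0:ℝ) 1))
    (Pi : Measure Θ) (ι : Θ → ℝ → ℝ) (hprior : IsL1Prior Pi ι)
    (hpos : 0 < Pi {θ | aeLeI (ι θ) f0})
    (B : Set Θ) (hB : MeasurableSet B) :
    ∫⁻ ω, post n pts Pi ι B ω ∂(P n f0) ≤ sepQ n (ι '' B) f0 :=
  stmt_5_general n P pts hmodel f0 hf0 Pi ι hprior B hB

end
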